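/- arXiv:2301.06150 — 11 statements merged into one kernel-verified Lean document; each statement's English description precedes it below -/
import Mathlib

section
/- Policy improvement decreases the average cost: Let S be a nonempty finite type, and let P_A, P_B : S → S → ℝ be row-stochastic matrices (all entries nonnegative and every row sums to 1). Let c_A, c_B : S → ℝ be cost functions, and suppose (V_A, θ_A) and (V_B, θ_B) satisfy the policy-evaluation equations V_A(s) + θ_A = c_A(s) + Σ_{s'} P_A(s,s')·V_A(s') and V_B(s) + θ_B = c_B(s) + Σ_{s'} P_B(s,s')·V_B(s') for all s ∈ S. Assume the improvement inequality c_B(s) + Σ_{s'} P_B(s,s')·V_A(s') ≤ c_A(s) + Σ_{s'} P_A(s,s')·V_A(s') holds for every s ∈ S, and assume there exists π : S → ℝ with π(s) ≥ 0 for all s, Σ_s π(s) = 1, and π(s') = Σ_s π(s)·P_B(s,s') for all s' (π is a stationary distribution of P_B). Then θ_B ≤ θ_A. -/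
/-- Policy improvement decreases the average cost (first part of the paper's
policy improvement theorem, Theorem 6). -/
theorem policy_improvement_decreases_cost
    {S : Type*} [Fintype S] [Nonempty S]
    (PA PB : S → S → ℝ) (cA cB VA VB : S → ℝ) (θA θB : ℝ)
    (hPA_nonneg : ∀ s s', 0 ≤ PA s s') (hPA_row : ∀ s, ∑ s', PA s s' = 1)
    (hPB_nonneg : ∀ s s', 0 ≤ PB s s') (hPB_row : ∀ s, ∑ s', PB s s' = 1)
    (hA : ∀ s, VA s + θA = cA s + ∑ s', PA s s' * VA s')
    (hB : ∀ s, VB s + θB = cB s + ∑ s', PB s s' * VB s')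
    (himp : ∀ s, cB s + ∑ s', PB s s' * VA s' ≤ cA s + ∑ s', PA s s' * VA s')
    (π : S → ℝ) (hπ_nonneg : ∀ s, 0 ≤ π s) (hπ_sum : ∑ s, π s = 1)
    (hπ_stat : ∀ s', π s' = ∑ s, π s * PB s s') :
    θB ≤ θA := by
  -- key: weighted sum under PB with stationary π is just the π-average
  have hswap : ∀ f : S → ℝ,
      ∑ s, π s * ∑ s', PB s s' * f s' = ∑ s, π s * f s := by
    intro f
    calc ∑ s, π s * ∑ s', PB s s' * f s'
        = ∑ s, ∑ s', π s * PB s s' * f s' := by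
          simp [Finset.mul_sum, mul_assoc]
      _ = ∑ s', (∑ s, π s * PB s s') * f s' := by
          rw [Finset.sum_comm]; simp [Finset.sum_mul]
      _ = ∑ s', π s' * f s' := by
          simp_rw [← hπ_stat]
  -- θB = Σ π cB
  have hθB : θB = ∑ s, π s * cB s := by
    have : ∑ s, π s * (VB s + θB) = ∑ s, π s * (cB s + ∑ s', PB s s' * VB s') := by
      exact Finset.sum_congr rfl fun s _ => by rw [hB s]
    have h2 : ∑ s, π s * VB s + θB
        = ∑ s, π s * cB s + ∑ s, π s * VB s := by
      calc ∑ s, π s * VB s + θB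
          = ∑ s, (π s * VB s + π s * θB) := by
            rw [Finset.sum_add_distrib, ← Finset.sum_mul, hπ_sum, one_mul]
        _ = ∑ s, π s * (cB s + ∑ s', PB s s' * VB s') := by
            simpa [mul_add] using this
        _ = ∑ s, π s * cB s + ∑ s, π s * ∑ s', PB s s' * VB s' := by
            simp [mul_add, Finset.sum_add_distrib]
        _ = ∑ s, π s * cB s + ∑ s, π s * VB s := by rw [hswap]
    linarith
  -- θA = Σ π (cA + PA VA - VA)
  have hθA : θA = ∑ s, π s * (cA s + ∑ s', PA s s' * VA s' - VA s) := by
    calc θA = ∑ s, π s * θA := by rw [← Finset.sum_mul, hπ_sum, one_mul]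
      _ = ∑ s, π s * (cA s + ∑ s', PA s s' * VA s' - VA s) := by
          refine Finset.sum_congr rfl fun s _ => ?_
          have h : θA = cA s + ∑ s', PA s s' * VA s' - VA s := by linarith [hA s]
          rw [h]
  -- compare
  have hle : ∑ s, π s * (cB s + ∑ s', PB s s' * VA s' - VA s)
      ≤ ∑ s, π s * (cA s + ∑ s', PA s s' * VA s' - VA s) := by
    refine Finset.sum_le_sum fun s _ => ?_
    have := himp s
    have := hπ_nonneg s
    nlinarith [himp s, hπ_nonneg s]
  have hBsum : ∑ s, π s * (cB s + ∑ s', PB s s' * VA s' - VA s)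
      = ∑ s, π s * cB s := by
    have : ∑ s, π s * (cB s + ∑ s', PB s s' * VA s' - VA s)
        = ∑ s, π s * cB s + ∑ s, π s * ∑ s', PB s s' * VA s'
          - ∑ s, π s * VA s := by
      simp [mul_add, mul_sub, Finset.sum_add_distrib, Finset.sum_sub_distrib]
    rw [this, hswap]; ring
  rw [hθB]
  linarith [hle, hBsum, hθA]
end

section
/- Convergence of policy improvement implies optimality: Let S be a nonempty finite type, and let P_A, P_B : S → S → ℝ be row-stochastic matrices (all entries nonnegative and every row sums to 1). Let c_A, c_B : S → ℝ be cost functions, and suppose (V_A, θ_A) and (V_B, θ_B) satisfy the policy-evaluation equations V_A(s) + θ_A = c_A(s) + Σ_{s'} P_A(s,s')·V_A(s') and V_B(s) + θ_B = c_B(s) + Σ_{s'} P_B(s,s')·V_B(s') for all s ∈ S. Assume that for every s ∈ S the inequality c_A(s) + Σ_{s'} P_A(s,s')·V_A(s') ≤ c_B(s) + Σ_{s'} P_B(s,s')·V_A(s') holds (i.e., policy A is a pointwise minimizer relative to its own value function), and assume there exists π : S → ℝ with π(s) ≥ 0 for all s, Σ_s π(s) = 1, and π(s') = Σ_s π(s)·P_B(s,s')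 for all s'. Then θ_A ≤ θ_B. -/
/-- Convergence of policy improvement implies optimality (second part of the
paper's policy improvement theorem, Theorem 6). -/
theorem policy_improvement_convergence_optimal
    {S : Type*} [Fintype S] [Nonempty S]
    (PA PB : S → S → ℝ) (cA cB VA VB : S → ℝ) (θA θB : ℝ)
    (hPA_nonneg : ∀ s s', 0 ≤ PA s s') (hPA_row : ∀ s, ∑ s', PA s s' = 1)
    (hPB_nonneg : ∀ s s', 0 ≤ PB s s') (hPB_row : ∀ s, ∑ s', PB s s' = 1)
    (hA : ∀ s, VA s + θA = cA s + ∑ s', PA s s' * VA s')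
    (hB : ∀ s, VB s + θB = cB s + ∑ s', PB s s' * VB s')
    (hmin : ∀ s, cA s + ∑ s', PA s s' * VA s' ≤ cB s + ∑ s', PB s s' * VA s')
    (π : S → ℝ) (hπ_nonneg : ∀ s, 0 ≤ π s) (hπ_sum : ∑ s, π s = 1)
    (hπ_stat : ∀ s', π s' = ∑ s, π s * PB s s') :
    θA ≤ θB := by
  -- key mixing identity: ∑ π(s) ∑ PB(s,s') f(s') = ∑ π f
  have hmix : ∀ f : S → ℝ,
      ∑ s, π s * ∑ s', PB s s' * f s' = ∑ s, π s * f s := by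
    intro f
    calc ∑ s, π s * ∑ s', PB s s' * f s'
        = ∑ s, ∑ s', π s * PB s s' * f s' := by
          simp [Finset.mul_sum, mul_assoc]
      _ = ∑ s', (∑ s, π s * PB s s') * f s' := by
          rw [Finset.sum_comm]; simp [Finset.sum_mul]
      _ = ∑ s', π s' * f s' := by
          simp_rw [← hπ_stat]
  -- θB = ∑ π cB
  have hBeq : ∑ s, π s * VB s + θB = ∑ s, π s * cB s + ∑ s, π s * VB s := by
    calc ∑ s, π s * VB s + θB
        = ∑ s, π s * (VB s + θB) := by
          simp [Finset.mul_sum, mul_add, Finset.sum_add_distrib, ← Finset.sum_mul, hπ_sum]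
      _ = ∑ s, π s * (cB s + ∑ s', PB s s' * VB s') := by
          simp_rw [hB]
      _ = ∑ s, π s * cB s + ∑ s, π s * ∑ s', PB s s' * VB s' := by
          simp [mul_add, Finset.sum_add_distrib]
      _ = ∑ s, π s * cB s + ∑ s, π s * VB s := by rw [hmix]
  have hθB : θB = ∑ s, π s * cB s := by linarith
  -- θA ≤ ∑ π cB
  have hAle : ∑ s, π s * VA s + θA ≤ ∑ s, π s * cB s + ∑ s, π s * VA s := by
    calc ∑ s, π s * VA s + θA
        = ∑ s, π s * (VA s + θA) := by
          simp [Finset.mul_sum, mul_add, Finset.sum_add_distrib, ← Finset.sum_mul, hπ_sum]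
      _ ≤ ∑ s, π s * (cB s + ∑ s', PB s s' * VA s') := by
          apply Finset.sum_le_sum
          intro s _
          have := (hA s).le.trans (hmin s)
          exact mul_le_mul_of_nonneg_left this (hπ_nonneg s)
      _ = ∑ s, π s * cB s + ∑ s, π s * ∑ s', PB s s' * VA s' := by
          simp [mul_add, Finset.sum_add_distrib]
      _ = ∑ s, π s * cB s + ∑ s, π s * VA s := by rw [hmix]
  linarith
end

section
/- Translation identity for the expected cumulative AoII during a transmission: Let p be a real number with 0 < p < 1 and let t ≥ 1, and Δ > s ≥ 1 be integers. Then C^t(Δ,1) − C^t(Δ−s,1) = (s − s·(1−p)^t)/p. -/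
/-- `pret p t` is the paper's `p^{(t)}`: the (1,1) entry of the `t`-th power
of `[[1−p, p], [p, 1−p]]`. -/
noncomputable def pret (p : ℝ) (t : ℕ) : ℝ :=
  ((!![1 - p, p; p, 1 - p] : Matrix (Fin 2) (Fin 2) ℝ) ^ t) 0 0

/-- Paper's `C^k(Δ)` for `Δ ≥ 1`: the expected AoII `k` slots after a
transmission starts at AoII level `Δ`, given the transmission is in progress. -/
noncomputable def Ck (p : ℝ) (Δ k : ℕ) : ℝ :=
  (∑ h ∈ Finset.Icc 1 (k - 1), (h : ℝ) * (1 - pret p (k - h)) * p * (1 - p) ^ (h - 1))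
    + ((Δ : ℝ) + (k : ℝ)) * (1 - p) ^ k

/-- Paper's `C^t(Δ,1)`: the expected cumulative AoII during a transmission of
duration `t` started at AoII level `Δ ≥ 1`. -/
noncomputable def Ct (p : ℝ) (Δ t : ℕ) : ℝ :=
  ∑ k ∈ Finset.range t, Ck p Δ k

/-- Translation identity for the expected cumulative AoII during a
transmission: `C^t(Δ,1) − C^t(Δ−s,1) = (s − s·(1−p)^t)/p`. -/
theorem Ct_translation
    (p : ℝ) (hp0 : 0 < p) (hp1 : p < 1)
    (t Δ s : ℕ) (ht : 1 ≤ t) (hs : 1 ≤ s) (hΔs : s < Δ) :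
    Ct p Δ t - Ct p (Δ - s) t = ((s : ℝ) - (s : ℝ) * (1 - p) ^ t) / p := by
  have hcast : ((Δ - s : ℕ) : ℝ) = (Δ : ℝ) - (s : ℝ) :=
    Nat.cast_sub hΔs.le
  have hx : (1 - p) ≠ 1 := by linarith
  have hgeom : ∑ k ∈ Finset.range t, (1 - p) ^ k
      = (1 - (1 - p) ^ t) / p := by
    rw [geom_sum_eq hx]
    rw [div_eq_div_iff (by linarith) (by linarith [hp0])]
    ring
  unfold Ct Ck
  rw [← Finset.sum_sub_distrib]
  have : ∀ k ∈ Finset.range t,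
      ((∑ h ∈ Finset.Icc 1 (k - 1), (h : ℝ) * (1 - pret p (k - h)) * p * (1 - p) ^ (h - 1))
        + ((Δ : ℝ) + (k : ℝ)) * (1 - p) ^ k)
      - ((∑ h ∈ Finset.Icc 1 (k - 1), (h : ℝ) * (1 - pret p (k - h)) * p * (1 - p) ^ (h - 1))
        + (((Δ - s : ℕ) : ℝ) + (k : ℝ)) * (1 - p) ^ k)
      = (s : ℝ) * (1 - p) ^ k := by
    intro k _
    rw [hcast]; ring
  rw [Finset.sum_congr rfl this, ← Finset.mul_sum, hgeom]
  field_simp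
end

section
/- Positivity of the denominator and the key inequality p·σ ≤ 1 under Assumption 1: Let p be a real number with 0 < p ≤ 1/2, let t_max ≥ 1 be an integer, and let p_1,…,p_{t_max} be nonnegative reals with Σ_{t=1}^{t_max} p_t = 1. Define D := 1 − Σ_{t=1}^{t_max} p·p_t·(1−p)^{t−1} and σ := (Σ_{t=1}^{t_max} p_t·(1−(1−p)^t)/p) / D. Then D > 0 and 1 − p·σ = (1−2p)·(Σ_{t=1}^{t_max} p_t·(1−p)^{t−1}) / D ≥ 0. -/
/-- Positivity of the denominator and the key inequality `p·σ ≤ 1` under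
Assumption 1 (Condition 1 / proof of Theorem 7 of the paper). -/
theorem sigma_key_inequality_assumption1
    (p : ℝ) (hp0 : 0 < p) (hp2 : p ≤ 1 / 2)
    (tmax : ℕ) (htmax : 1 ≤ tmax)
    (pt : ℕ → ℝ) (hpt_nonneg : ∀ t ∈ Finset.Icc 1 tmax, 0 ≤ pt t)
    (hpt_sum : ∑ t ∈ Finset.Icc 1 tmax, pt t = 1) :
    0 < 1 - ∑ t ∈ Finset.Icc 1 tmax, p * pt t * (1 - p) ^ (t - 1) ∧
      1 - p * ((∑ t ∈ Finset.Icc 1 tmax, pt t * (1 - (1 - p) ^ t) / p) /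
          (1 - ∑ t ∈ Finset.Icc 1 tmax, p * pt t * (1 - p) ^ (t - 1)))
        = (1 - 2 * p) * (∑ t ∈ Finset.Icc 1 tmax, pt t * (1 - p) ^ (t - 1)) /
          (1 - ∑ t ∈ Finset.Icc 1 tmax, p * pt t * (1 - p) ^ (t - 1)) ∧
      0 ≤ (1 - 2 * p) * (∑ t ∈ Finset.Icc 1 tmax, pt t * (1 - p) ^ (t - 1)) /
          (1 - ∑ t ∈ Finset.Icc 1 tmax, p * pt t * (1 - p) ^ (t - 1)) := by
  set S := Finset.Icc 1 tmax with hS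
  have h1p0 : (0:ℝ) ≤ 1 - p := by linarith
  have h1p1 : (1:ℝ) - p ≤ 1 := by linarith
  -- Denominator positivity
  have hsum_le : ∑ t ∈ S, p * pt t * (1 - p) ^ (t - 1) ≤ p := by
    calc ∑ t ∈ S, p * pt t * (1 - p) ^ (t - 1)
        ≤ ∑ t ∈ S, p * pt t := by
          refine Finset.sum_le_sum fun t ht => ?_
          have hpow : (1 - p) ^ (t - 1) ≤ 1 := pow_le_one₀ h1p0 h1p1
          exact mul_le_of_le_one_right (mul_nonneg hp0.le (hpt_nonneg t ht)) hpow
      _ = p * ∑ t ∈ S, pt t := by rw [Finset.mul_sum]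
      _ = p := by rw [hpt_sum]; ring
  have hDpos : 0 < 1 - ∑ t ∈ S, p * pt t * (1 - p) ^ (t - 1) := by linarith
  refine ⟨hDpos, ?_, ?_⟩
  · -- key algebraic identity
    set D := 1 - ∑ t ∈ S, p * pt t * (1 - p) ^ (t - 1) with hD
    have hA : ∑ t ∈ S, pt t * (1 - (1 - p) ^ t) / p
        = (∑ t ∈ S, pt t * (1 - (1 - p) ^ t)) / p := by
      rw [Finset.sum_div]
    have hkey : D - ∑ t ∈ S, pt t * (1 - (1 - p) ^ t)
        = (1 - 2 * p) * ∑ t ∈ S, pt t * (1 - p) ^ (t - 1) := by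
      have hterm : ∀ t ∈ S, pt t - p * pt t * (1 - p) ^ (t - 1)
          - pt t * (1 - (1 - p) ^ t) = (1 - 2 * p) * (pt t * (1 - p) ^ (t - 1)) := by
        intro t ht
        obtain ⟨ht1, _⟩ := Finset.mem_Icc.mp ht
        have hpw : (1 - p) ^ t = (1 - p) ^ (t - 1) * (1 - p) := by
          rw [← pow_succ, Nat.sub_add_cancel ht1]
        rw [hpw]; ring
      have h1 := Finset.sum_congr rfl hterm
      rw [← Finset.mul_sum, Finset.sum_sub_distrib, Finset.sum_sub_distrib, hpt_sum] at h1
      rw [hD]; linarith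
    have e1 : p * ((∑ t ∈ S, pt t * (1 - (1 - p) ^ t)) / p / D)
        = (∑ t ∈ S, pt t * (1 - (1 - p) ^ t)) / D := by
      field_simp
    rw [hA, e1, eq_div_iff (ne_of_gt hDpos), sub_mul,
      div_mul_cancel₀ _ (ne_of_gt hDpos), one_mul, mul_comm ((1:ℝ) - 2 * p)]
    linarith [hkey]
  · apply div_nonneg _ hDpos.le
    apply mul_nonneg (by linarith)
    exact Finset.sum_nonneg fun t ht =>
      mul_nonneg (hpt_nonneg t ht) (pow_nonneg h1p0 _)
end

section
/- Positivity of the denominator and the key inequality p·σ ≤ 1 under Assumption 2: Let p be a real number with 0 < p ≤ 1/2, let t_max ≥ 1 be an integer, and let p_1,…,p_{t_max} and p⁺ be nonnegative reals with Σ_{t=1}^{t_max} p_t + p⁺ = 1. Define D := 1 − (Σ_{t=1}^{t_max} p·p_t·(1−p)^{t−1} + p⁺·(1−p)^{t_max}) and σ := (Σ_{t=1}^{t_max} p_t·(1−(1−p)^t)/p + p⁺·(1−(1−p)^{t_max})/p) / D. Then D > 0 and p·σ ≤ 1. -/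
/-- Positivity of the denominator and the key inequality `p·σ ≤ 1` under
Assumption 2 (Condition 1 / proof of Theorem 7 of the paper). -/
theorem sigma_key_inequality_assumption2
    (p : ℝ) (hp0 : 0 < p) (hp2 : p ≤ 1 / 2)
    (tmax : ℕ) (htmax : 1 ≤ tmax)
    (pt : ℕ → ℝ) (pplus : ℝ)
    (hpt_nonneg : ∀ t ∈ Finset.Icc 1 tmax, 0 ≤ pt t) (hpplus_nonneg : 0 ≤ pplus)
    (hpt_sum : (∑ t ∈ Finset.Icc 1 tmax, pt t) + pplus = 1) :
    0 < 1 - ((∑ t ∈ Finset.Icc 1 tmax, p * pt t * (1 - p) ^ (t - 1))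
          + pplus * (1 - p) ^ tmax) ∧
      p * (((∑ t ∈ Finset.Icc 1 tmax, pt t * (1 - (1 - p) ^ t) / p)
            + pplus * (1 - (1 - p) ^ tmax) / p) /
          (1 - ((∑ t ∈ Finset.Icc 1 tmax, p * pt t * (1 - p) ^ (t - 1))
            + pplus * (1 - p) ^ tmax))) ≤ 1 := by
  set q : ℝ := 1 - p with hq
  have hq0 : 0 ≤ q := by rw [hq]; linarith
  have hq1 : q ≤ 1 := by rw [hq]; linarith
  have hpq : p ≤ q := by rw [hq]; linarith
  -- bound each term of the denominator sum
  have h1 : ∀ t ∈ Finset.Icc 1 tmax, p * pt t * q ^ (t - 1) ≤ q * pt t := by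
    intro t ht
    have hpt := hpt_nonneg t ht
    have hqpow : q ^ (t - 1) ≤ 1 := pow_le_one₀ hq0 hq1
    have hqpow0 : (0:ℝ) ≤ q ^ (t - 1) := pow_nonneg hq0 _
    have hpx : p * q ^ (t - 1) ≤ q := le_trans (by nlinarith) hpq
    calc p * pt t * q ^ (t - 1) = (p * q ^ (t - 1)) * pt t := by ring
    _ ≤ q * pt t := mul_le_mul_of_nonneg_right hpx hpt
  have hsum1 : (∑ t ∈ Finset.Icc 1 tmax, p * pt t * q ^ (t - 1))
      ≤ ∑ t ∈ Finset.Icc 1 tmax, q * pt t := Finset.sum_le_sum h1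
  have hqt : q ^ tmax ≤ q := by
    calc q ^ tmax ≤ q ^ 1 := pow_le_pow_of_le_one hq0 hq1 htmax
    _ = q := pow_one q
  have hsumq : (∑ t ∈ Finset.Icc 1 tmax, q * pt t) = q * ∑ t ∈ Finset.Icc 1 tmax, pt t := by
    rw [Finset.mul_sum]
  have hD : 0 < 1 - ((∑ t ∈ Finset.Icc 1 tmax, p * pt t * q ^ (t - 1))
      + pplus * q ^ tmax) := by
    have h2 : pplus * q ^ tmax ≤ pplus * q := by
      exact mul_le_mul_of_nonneg_left hqt hpplus_nonneg
    have h3 : (∑ t ∈ Finset.Icc 1 tmax, p * pt t * q ^ (t - 1)) + pplus * q ^ tmax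
        ≤ q * ((∑ t ∈ Finset.Icc 1 tmax, pt t) + pplus) := by
      rw [mul_add]
      exact add_le_add (hsum1.trans_eq hsumq) (h2.trans_eq (mul_comm _ _))
    rw [hpt_sum, mul_one] at h3
    have : q < 1 := by rw [hq]; linarith
    linarith
  refine ⟨hD, ?_⟩
  -- key inequality: numerator (times p) ≤ denominator, termwise
  have h4 : ∀ t ∈ Finset.Icc 1 tmax, pt t * (1 - q ^ t) ≤ pt t * (1 - p * q ^ (t - 1)) := by
    intro t ht
    have hpt := hpt_nonneg t ht
    have ht1 : 1 ≤ t := (Finset.mem_Icc.mp ht).1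
    have hqt' : q ^ t = q ^ (t - 1) * q := by
      rw [← pow_succ, Nat.sub_add_cancel ht1]
    have hqpow0 : (0:ℝ) ≤ q ^ (t - 1) := pow_nonneg hq0 _
    have : p * q ^ (t - 1) ≤ q ^ t := by
      rw [hqt']
      nlinarith
    nlinarith
  have hnum : (∑ t ∈ Finset.Icc 1 tmax, pt t * (1 - q ^ t)) + pplus * (1 - q ^ tmax)
      ≤ 1 - ((∑ t ∈ Finset.Icc 1 tmax, p * pt t * q ^ (t - 1)) + pplus * q ^ tmax) := by
    have := Finset.sum_le_sum h4
    have hsplit : (∑ t ∈ Finset.Icc 1 tmax, pt t * (1 - p * q ^ (t - 1)))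
        = (∑ t ∈ Finset.Icc 1 tmax, pt t) - ∑ t ∈ Finset.Icc 1 tmax, p * pt t * q ^ (t - 1) := by
      rw [← Finset.sum_sub_distrib]
      exact Finset.sum_congr rfl fun t _ => by ring
    rw [hsplit] at this
    nlinarith [hpt_sum]
  -- rewrite the p * (N / D) expression
  have hp' : p ≠ 0 := ne_of_gt hp0
  have hmul : p * ((∑ t ∈ Finset.Icc 1 tmax, pt t * (1 - q ^ t) / p)
      + pplus * (1 - q ^ tmax) / p)
      = (∑ t ∈ Finset.Icc 1 tmax, pt t * (1 - q ^ t)) + pplus * (1 - q ^ tmax) := by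
    rw [← Finset.sum_div]
    field_simp
  rw [mul_div_assoc', hmul, div_le_one hD]
  exact hnum
end

section
/- Nonnegativity of the action gap in the policy improvement step (proof of Theorem 7): Let p, σ, θ be real numbers with p > 0, p·σ ≤ 1 and 2θ ≤ 1 + (1−p)·σ, and let V : ℕ → ℝ satisfy V(1) − V(0) = θ/p and V(Δ+1) − V(Δ) = σ for every integer Δ ≥ 1. Define δV(Δ) := Δ − θ + (1−p)·V(Δ+1) + p·V(0) − V(Δ). Then for every integer Δ ≥ 1: (i) δV(Δ) = Δ − 2θ + ((1−p) − p·(Δ−1))·σ, (ii) δV(Δ+1) − δV(Δ) = 1 − p·σ, and (iii) δV(Δ) ≥ 0. -/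
/-- Nonnegativity of the action gap in the policy improvement step (proof of
Theorem 7 of the paper): the advantage `δV(Δ)` of transmitting over idling is
nonnegative for every `Δ ≥ 1`. -/
theorem action_gap_nonneg
    (p σ θ : ℝ) (hp : 0 < p) (hpσ : p * σ ≤ 1) (hθ : 2 * θ ≤ 1 + (1 - p) * σ)
    (V : ℕ → ℝ) (hV10 : V 1 - V 0 = θ / p)
    (hVinc : ∀ Δ : ℕ, 1 ≤ Δ → V (Δ + 1) - V Δ = σ) :
    ∀ Δ : ℕ, 1 ≤ Δ →
      ((Δ : ℝ) - θ + (1 - p) * V (Δ + 1) + p * V 0 - V Δ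
          = (Δ : ℝ) - 2 * θ + ((1 - p) - p * ((Δ : ℝ) - 1)) * σ) ∧
      ((((Δ + 1 : ℕ) : ℝ) - θ + (1 - p) * V (Δ + 2) + p * V 0 - V (Δ + 1))
          - ((Δ : ℝ) - θ + (1 - p) * V (Δ + 1) + p * V 0 - V Δ)
          = 1 - p * σ) ∧
      0 ≤ (Δ : ℝ) - θ + (1 - p) * V (Δ + 1) + p * V 0 - V Δ := by
  have key : ∀ Δ : ℕ, 1 ≤ Δ → V Δ = V 1 + ((Δ : ℝ) - 1) * σ := by
    intro Δ h
    induction Δ with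
    | zero => omega
    | succ n ih =>
      rcases Nat.lt_or_ge n 1 with h1 | h1
      · interval_cases n
        simp
      · have h2 := hVinc n h1
        have h3 := ih h1
        push_cast
        push_cast at h3
        linarith
  have hθp : (V 1 - V 0) * p = θ := by
    rw [hV10]; field_simp
  intro Δ hΔ
  have k1 := key Δ hΔ
  have k2 := key (Δ + 1) (by omega)
  have k3 := key (Δ + 2) (by omega)
  push_cast at k1 k2 k3 ⊢
  have hΔ1 : (1 : ℝ) ≤ (Δ : ℝ) := by exact_mod_cast hΔ
  refine ⟨by nlinarith, by nlinarith, by nlinarith⟩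
end

section
/- Constant increments are preserved by the policy-evaluation update under Assumption 1 (induction step of Lemma 9): Let p be a real number with 0 < p < 1, t_max ≥ 1 an integer, p_1,…,p_{t_max}, ET, θ, σ real numbers, and V : ℕ → ℝ a function with V(Δ+1) − V(Δ) = σ for every integer Δ ≥ 1. Define W : {Δ ∈ ℕ : Δ ≥ 1} → ℝ by W(Δ) := Σ_{t=1}^{t_max} p_t·C^t(Δ,1) − ET·θ + Σ_{t=1}^{t_max} p_t·( P^t_0·V(0) + P^t_1·V(1) + Σ_{k=2}^{t−1} P^t_k·V(k) + p·(1−p)^{t−1}·V(Δ+t) ), where P^t_0 := p^{(t)}, P^t_1 := (1−p^{(t−1)})·(1−p), and P^t_k := (1−p^{(t−k)})·p²·(1−p)^{k−2} for 2 ≤ k ≤ t−1. Then for every integer Δ ≥ 1, W(Δ+1) − W(Δ) = Σ_{t=1}^{t_max} p_t·(1−(1−p)^t)/p + (Σ_{t=1}^{t_max} p_t·p·(1−p)^{t−1})·σ; in particular this difference does not depend on Δ. -/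
/-- Constant increments are preserved by the policy-evaluation update under
Assumption 1 (induction step of Lemma 9 in the paper's Appendix L). -/
theorem policy_evaluation_update_constant_increments_assumption1
    (p : ℝ) (hp0 : 0 < p) (hp1 : p < 1)
    (tmax : ℕ) (htmax : 1 ≤ tmax)
    (pt : ℕ → ℝ) (ET θ σ : ℝ)
    (V : ℕ → ℝ) (hV : ∀ Δ : ℕ, 1 ≤ Δ → V (Δ + 1) - V Δ = σ)
    (W : ℕ → ℝ)
    (hW : ∀ Δ : ℕ, 1 ≤ Δ →
      W Δ = (∑ t ∈ Finset.Icc 1 tmax, pt t * Ct p Δ t) - ET * θ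
        + ∑ t ∈ Finset.Icc 1 tmax, pt t *
            (pret p t * V 0
              + (1 - pret p (t - 1)) * (1 - p) * V 1
              + (∑ k ∈ Finset.Icc 2 (t - 1),
                  (1 - pret p (t - k)) * p ^ 2 * (1 - p) ^ (k - 2) * V k)
              + p * (1 - p) ^ (t - 1) * V (Δ + t))) :
    ∀ Δ : ℕ, 1 ≤ Δ →
      W (Δ + 1) - W Δ
        = (∑ t ∈ Finset.Icc 1 tmax, pt t * (1 - (1 - p) ^ t) / p)
          + (∑ t ∈ Finset.Icc 1 tmax, pt t * p * (1 - p) ^ (t - 1)) * σ := by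
  intro Δ hΔ
  have hp : p ≠ 0 := ne_of_gt hp0
  have hCk : ∀ k : ℕ, Ck p (Δ + 1) k - Ck p Δ k = (1 - p) ^ k := by
    intro k
    unfold Ck
    push_cast
    ring
  have hCt : ∀ t : ℕ, Ct p (Δ + 1) t - Ct p Δ t = (1 - (1 - p) ^ t) / p := by
    intro t
    unfold Ct
    rw [← Finset.sum_sub_distrib]
    rw [Finset.sum_congr rfl (fun k _ => hCk k)]
    rw [geom_sum_eq (by intro h; apply hp; linarith [h] : (1 - p) ≠ 1)]
    rw [show (1 : ℝ) - p - 1 = -p by ring, div_neg]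
    ring
  have hVd : ∀ t : ℕ, V (Δ + 1 + t) - V (Δ + t) = σ := by
    intro t
    have := hV (Δ + t) (by omega)
    rw [show Δ + 1 + t = Δ + t + 1 by omega]
    exact this
  rw [hW (Δ + 1) (by omega), hW Δ hΔ]
  have key : ∀ t ∈ Finset.Icc 1 tmax,
      (pt t * Ct p (Δ + 1) t - pt t * Ct p Δ t)
      + (pt t *
            (pret p t * V 0
              + (1 - pret p (t - 1)) * (1 - p) * V 1
              + (∑ k ∈ Finset.Icc 2 (t - 1),
                  (1 - pret p (t - k)) * p ^ 2 * (1 - p) ^ (k - 2) * V k)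
              + p * (1 - p) ^ (t - 1) * V (Δ + 1 + t))
        - pt t *
            (pret p t * V 0
              + (1 - pret p (t - 1)) * (1 - p) * V 1
              + (∑ k ∈ Finset.Icc 2 (t - 1),
                  (1 - pret p (t - k)) * p ^ 2 * (1 - p) ^ (k - 2) * V k)
              + p * (1 - p) ^ (t - 1) * V (Δ + t)))
      = pt t * (1 - (1 - p) ^ t) / p + pt t * p * (1 - p) ^ (t - 1) * σ := by
    intro t _
    have h1 : pt t * Ct p (Δ + 1) t - pt t * Ct p Δ t
        = pt t * (1 - (1 - p) ^ t) / p := by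
      rw [← mul_sub, hCt t]; ring
    have h2 : V (Δ + 1 + t) = V (Δ + t) + σ := by
      have := hVd t; linarith
    rw [h1, h2]; ring
  calc (∑ t ∈ Finset.Icc 1 tmax, pt t * Ct p (Δ + 1) t) - ET * θ
        + (∑ t ∈ Finset.Icc 1 tmax, pt t *
            (pret p t * V 0
              + (1 - pret p (t - 1)) * (1 - p) * V 1
              + (∑ k ∈ Finset.Icc 2 (t - 1),
                  (1 - pret p (t - k)) * p ^ 2 * (1 - p) ^ (k - 2) * V k)
              + p * (1 - p) ^ (t - 1) * V (Δ + 1 + t)))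
      - ((∑ t ∈ Finset.Icc 1 tmax, pt t * Ct p Δ t) - ET * θ
        + (∑ t ∈ Finset.Icc 1 tmax, pt t *
            (pret p t * V 0
              + (1 - pret p (t - 1)) * (1 - p) * V 1
              + (∑ k ∈ Finset.Icc 2 (t - 1),
                  (1 - pret p (t - k)) * p ^ 2 * (1 - p) ^ (k - 2) * V k)
              + p * (1 - p) ^ (t - 1) * V (Δ + t))))
      = ∑ t ∈ Finset.Icc 1 tmax,
          ((pt t * Ct p (Δ + 1) t - pt t * Ct p Δ t)
            + (pt t *
            (pret p t * V 0
              + (1 - pret p (t - 1)) * (1 - p) * V 1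
              + (∑ k ∈ Finset.Icc 2 (t - 1),
                  (1 - pret p (t - k)) * p ^ 2 * (1 - p) ^ (k - 2) * V k)
              + p * (1 - p) ^ (t - 1) * V (Δ + 1 + t))
          - pt t *
            (pret p t * V 0
              + (1 - pret p (t - 1)) * (1 - p) * V 1
              + (∑ k ∈ Finset.Icc 2 (t - 1),
                  (1 - pret p (t - k)) * p ^ 2 * (1 - p) ^ (k - 2) * V k)
              + p * (1 - p) ^ (t - 1) * V (Δ + t)))) := by
        rw [Finset.sum_add_distrib, Finset.sum_sub_distrib, Finset.sum_sub_distrib]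
        ring
    _ = ∑ t ∈ Finset.Icc 1 tmax,
          (pt t * (1 - (1 - p) ^ t) / p + pt t * p * (1 - p) ^ (t - 1) * σ) :=
        Finset.sum_congr rfl key
    _ = (∑ t ∈ Finset.Icc 1 tmax, pt t * (1 - (1 - p) ^ t) / p)
          + (∑ t ∈ Finset.Icc 1 tmax, pt t * p * (1 - p) ^ (t - 1)) * σ := by
        rw [Finset.sum_add_distrib, Finset.sum_mul]
end

section
/- Constant increments are preserved by the policy-evaluation update under Assumption 2 (induction step of Lemma 9): Let p be a real number with 0 < p < 1, t_max ≥ 1 an integer, p_1,…,p_{t_max}, p⁺, ET, θ, σ real numbers, and V : ℕ → ℝ a function with V(Δ+1) − V(Δ) = σ for every integer Δ ≥ 1. Define W : {Δ ∈ ℕ : Δ ≥ 1} → ℝ by W(Δ) := Σ_{t=1}^{t_max} p_t·C^t(Δ,1) + p⁺·C^{t_max}(Δ,1) − ET·θ + Σ_{t=1}^{t_max} p_t·( P^t_0·V(0) + P^t_1·V(1) + Σ_{k=2}^{t−1} P^t_k·V(k) + p·(1−p)^{t−1}·V(Δ+t) ) + p⁺·( Q_0·V(0) + Σ_{k=1}^{t_max−1}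 Q_k·V(k) + (1−p)^{t_max}·V(Δ+t_max) ), where P^t_0 := p^{(t)}, P^t_1 := (1−p^{(t−1)})·(1−p), P^t_k := (1−p^{(t−k)})·p²·(1−p)^{k−2} for 2 ≤ k ≤ t−1, Q_0 := 1 − p^{(t_max)}, and Q_k := (1−p^{(t_max−k)})·p·(1−p)^{k−1} for 1 ≤ k ≤ t_max−1. Then for every integer Δ ≥ 1, W(Δ+1) − W(Δ) = Σ_{t=1}^{t_max} p_t·(1−(1−p)^t)/p + p⁺·(1−(1−p)^{t_max})/p + (Σ_{t=1}^{t_max} p_t·p·(1−p)^{t−1} + p⁺·(1−p)^{t_max})·σ; in particular this difference does not depend on Δ. -/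
/-- Constant increments are preserved by the policy-evaluation update under
Assumption 2 (induction step of Lemma 9 in the paper's Appendix L). -/
theorem policy_evaluation_update_constant_increments_assumption2
    (p : ℝ) (hp0 : 0 < p) (hp1 : p < 1)
    (tmax : ℕ) (htmax : 1 ≤ tmax)
    (pt : ℕ → ℝ) (pplus ET θ σ : ℝ)
    (V : ℕ → ℝ) (hV : ∀ Δ : ℕ, 1 ≤ Δ → V (Δ + 1) - V Δ = σ)
    (W : ℕ → ℝ)
    (hW : ∀ Δ : ℕ, 1 ≤ Δ →
      W Δ = (∑ t ∈ Finset.Icc 1 tmax, pt t * Ct p Δ t)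
        + pplus * Ct p Δ tmax - ET * θ
        + (∑ t ∈ Finset.Icc 1 tmax, pt t *
            (pret p t * V 0
              + (1 - pret p (t - 1)) * (1 - p) * V 1
              + (∑ k ∈ Finset.Icc 2 (t - 1),
                  (1 - pret p (t - k)) * p ^ 2 * (1 - p) ^ (k - 2) * V k)
              + p * (1 - p) ^ (t - 1) * V (Δ + t)))
        + pplus *
            ((1 - pret p tmax) * V 0
              + (∑ k ∈ Finset.Icc 1 (tmax - 1),
                  (1 - pret p (tmax - k)) * p * (1 - p) ^ (k - 1) * V k)
              + (1 - p) ^ tmax * V (Δ + tmax))) :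
    ∀ Δ : ℕ, 1 ≤ Δ →
      W (Δ + 1) - W Δ
        = (∑ t ∈ Finset.Icc 1 tmax, pt t * (1 - (1 - p) ^ t) / p)
          + pplus * (1 - (1 - p) ^ tmax) / p
          + ((∑ t ∈ Finset.Icc 1 tmax, pt t * p * (1 - p) ^ (t - 1))
              + pplus * (1 - p) ^ tmax) * σ := by
  intro Δ hΔ
  have hp : p ≠ 0 := ne_of_gt hp0
  have hCk : ∀ k : ℕ, Ck p (Δ + 1) k = Ck p Δ k + (1 - p) ^ k := by
    intro k
    unfold Ck
    push_cast
    ring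
  have hCt' : ∀ t : ℕ, Ct p (Δ + 1) t = Ct p Δ t + (1 - (1 - p) ^ t) / p := by
    intro t
    unfold Ct
    have hgeom : ∑ k ∈ Finset.range t, (1 - p) ^ k = (1 - (1 - p) ^ t) / p := by
      have h1 : (1 : ℝ) - p ≠ 1 := by intro h; apply hp; linarith
      rw [geom_sum_eq h1, show (1 : ℝ) - p - 1 = -p from by ring, div_neg, ← neg_div,
        neg_sub]
    calc ∑ k ∈ Finset.range t, Ck p (Δ + 1) k
        = ∑ k ∈ Finset.range t, (Ck p Δ k + (1 - p) ^ k) := by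
          exact Finset.sum_congr rfl fun k _ => hCk k
      _ = (∑ k ∈ Finset.range t, Ck p Δ k) + ∑ k ∈ Finset.range t, (1 - p) ^ k := by
          rw [Finset.sum_add_distrib]
      _ = (∑ k ∈ Finset.range t, Ck p Δ k) + (1 - (1 - p) ^ t) / p := by rw [hgeom]
  have hV' : ∀ t : ℕ, V (Δ + 1 + t) = V (Δ + t) + σ := by
    intro t
    have h := hV (Δ + t) (by omega)
    have : Δ + 1 + t = Δ + t + 1 := by omega
    rw [this]
    linarith
  have S1d : (∑ t ∈ Finset.Icc 1 tmax, pt t * Ct p (Δ + 1) t)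
      = (∑ t ∈ Finset.Icc 1 tmax, pt t * Ct p Δ t)
        + ∑ t ∈ Finset.Icc 1 tmax, pt t * (1 - (1 - p) ^ t) / p := by
    rw [← Finset.sum_add_distrib]
    exact Finset.sum_congr rfl fun t _ => by rw [hCt' t]; ring
  have S2d : (∑ t ∈ Finset.Icc 1 tmax, pt t *
            (pret p t * V 0
              + (1 - pret p (t - 1)) * (1 - p) * V 1
              + (∑ k ∈ Finset.Icc 2 (t - 1),
                  (1 - pret p (t - k)) * p ^ 2 * (1 - p) ^ (k - 2) * V k)
              + p * (1 - p) ^ (t - 1) * V (Δ + 1 + t)))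
      = (∑ t ∈ Finset.Icc 1 tmax, pt t *
            (pret p t * V 0
              + (1 - pret p (t - 1)) * (1 - p) * V 1
              + (∑ k ∈ Finset.Icc 2 (t - 1),
                  (1 - pret p (t - k)) * p ^ 2 * (1 - p) ^ (k - 2) * V k)
              + p * (1 - p) ^ (t - 1) * V (Δ + t)))
        + ∑ t ∈ Finset.Icc 1 tmax, pt t * p * (1 - p) ^ (t - 1) * σ := by
    rw [← Finset.sum_add_distrib]
    exact Finset.sum_congr rfl fun t _ => by rw [hV' t]; ring
  have e3 : (∑ t ∈ Finset.Icc 1 tmax, pt t * p * (1 - p) ^ (t - 1) * σ)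
      = (∑ t ∈ Finset.Icc 1 tmax, pt t * p * (1 - p) ^ (t - 1)) * σ := by
    rw [Finset.sum_mul]
  rw [hW (Δ + 1) (by omega), hW Δ hΔ]
  linear_combination S1d + S2d + e3 + pplus * hCt' tmax + pplus * (1 - p) ^ tmax * hV' tmax
end

section
/- Tail-mass identity for a summable sequence satisfying a linear recurrence (key step of Theorem 1): Let π : ℕ → ℝ be nonnegative and summable, let T ≥ 1 and ω ≥ T be integers, and let a_1,…,a_T be nonnegative reals. Suppose π(Δ) = Σ_{t=1}^{T} a_t·π(Δ−t) for every integer Δ ≥ ω. Then (1 − Σ_{t=1}^{T} a_t)·Σ_{Δ=ω}^{∞} π(Δ) = Σ_{t=1}^{T} a_t·Σ_{i=ω−t}^{ω−1} π(i). -/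
/-- Tail-mass identity for a summable sequence satisfying a linear recurrence
(key step of Theorem 1 of the paper). -/
theorem tail_mass_identity
    (π : ℕ → ℝ) (hπ_nonneg : ∀ Δ, 0 ≤ π Δ) (hπ_summable : Summable π)
    (T ω : ℕ) (hT : 1 ≤ T) (hω : T ≤ ω)
    (a : ℕ → ℝ) (ha_nonneg : ∀ t ∈ Finset.Icc 1 T, 0 ≤ a t)
    (hrec : ∀ Δ : ℕ, ω ≤ Δ → π Δ = ∑ t ∈ Finset.Icc 1 T, a t * π (Δ - t)) :
    (1 - ∑ t ∈ Finset.Icc 1 T, a t) * (∑' Δ : ℕ, π (Δ + ω))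
      = ∑ t ∈ Finset.Icc 1 T, a t * ∑ i ∈ Finset.Icc (ω - t) (ω - 1), π i := by
  set PP : ℝ := ∑' Δ : ℕ, π (Δ + ω) with hPP
  have hsummPP : Summable (fun Δ : ℕ => π (Δ + ω)) :=
    (summable_nat_add_iff ω).mpr hπ_summable
  have hshift : ∀ t ∈ Finset.Icc 1 T,
      (∑' Δ : ℕ, π (Δ + (ω - t)))
        = (∑ i ∈ Finset.Icc (ω - t) (ω - 1), π i) + PP := by
    intro t ht
    obtain ⟨ht1, htT⟩ := Finset.mem_Icc.mp ht
    have htω : t ≤ ω := le_trans htT hω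
    have hs : Summable (fun Δ : ℕ => π (Δ + (ω - t))) :=
      (summable_nat_add_iff (ω - t)).mpr hπ_summable
    have key := Summable.sum_add_tsum_nat_add (f := fun Δ : ℕ => π (Δ + (ω - t))) t hs
    have h1 : (∑' Δ : ℕ, π (Δ + t + (ω - t))) = PP := by
      apply tsum_congr
      intro Δ
      congr 1
      omega
    have h2 : (∑ i ∈ Finset.range t, π (i + (ω - t)))
        = ∑ i ∈ Finset.Icc (ω - t) (ω - 1), π i := by
      have hIcc : Finset.Icc (ω - t) (ω - 1) = Finset.Ico (ω - t) ω := by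
        ext x
        simp only [Finset.mem_Icc, Finset.mem_Ico]
        omega
      rw [hIcc, Finset.sum_Ico_eq_sum_range]
      have : ω - (ω - t) = t := by omega
      rw [this]
      exact Finset.sum_congr rfl (fun i _ => by rw [Nat.add_comm])
    rw [h2, h1] at key
    exact key.symm
  have hrec' : ∀ Δ : ℕ, π (Δ + ω) = ∑ t ∈ Finset.Icc 1 T, a t * π (Δ + (ω - t)) := by
    intro Δ
    rw [hrec (Δ + ω) (Nat.le_add_left ω Δ)]
    refine Finset.sum_congr rfl (fun t ht => ?_)
    obtain ⟨ht1, htT⟩ := Finset.mem_Icc.mp ht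
    have : Δ + ω - t = Δ + (ω - t) := by omega
    rw [this]
  have hPPeq : PP = ∑ t ∈ Finset.Icc 1 T,
      a t * ((∑ i ∈ Finset.Icc (ω - t) (ω - 1), π i) + PP) := by
    calc PP = ∑' Δ : ℕ, ∑ t ∈ Finset.Icc 1 T, a t * π (Δ + (ω - t)) :=
          tsum_congr hrec'
      _ = ∑ t ∈ Finset.Icc 1 T, ∑' Δ : ℕ, a t * π (Δ + (ω - t)) := by
          apply Summable.tsum_finsetSum
          intro t ht
          exact ((summable_nat_add_iff (ω - t)).mpr hπ_summable).mul_left (a t)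
      _ = ∑ t ∈ Finset.Icc 1 T, a t * ∑' Δ : ℕ, π (Δ + (ω - t)) := by
          refine Finset.sum_congr rfl (fun t ht => ?_)
          exact tsum_mul_left
      _ = _ := Finset.sum_congr rfl (fun t ht => by rw [hshift t ht])
  have hexpand : ∑ t ∈ Finset.Icc 1 T,
      a t * ((∑ i ∈ Finset.Icc (ω - t) (ω - 1), π i) + PP)
      = (∑ t ∈ Finset.Icc 1 T, a t * ∑ i ∈ Finset.Icc (ω - t) (ω - 1), π i)
        + (∑ t ∈ Finset.Icc 1 T, a t) * PP := by
    rw [Finset.sum_mul]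
    rw [← Finset.sum_add_distrib]
    exact Finset.sum_congr rfl (fun t ht => by ring)
  rw [hexpand] at hPPeq
  linarith [hPPeq]
end

section
/- Weighted tail-sum identity for a summable sequence satisfying a linear recurrence (key step of Theorem 3): Let π : ℕ → ℝ be nonnegative and summable, let T ≥ 1 and ω ≥ T be integers, let a_1,…,a_T be nonnegative reals, and suppose π(Δ) = Σ_{t=1}^{T} a_t·π(Δ−t) for every integer Δ ≥ ω. Let f : ℕ → ℝ and d_1,…,d_T be reals such that f(i+t) = f(i) + d_t for all integers i ≥ ω−T and all 1 ≤ t ≤ T, and suppose the series Σ_Δ |f(Δ)|·π(Δ) converges. Then, writing Π := Σ_{Δ=ω}^{∞} π(Δ), we have (1 − Σ_{t=1}^{T} a_t)·Σ_{Δ=ω}^{∞} f(Δ)·π(Δ) = Σ_{t=1}^{T} a_t·( Σ_{i=ω−t}^{ω−1} f(i)·π(i) + d_t·( Σ_{i=ω−t}^{ω−1} π(i) + Π ) ). -/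
/-- Weighted tail-sum identity for a summable sequence satisfying a linear
recurrence (key step of Theorem 3 of the paper). -/
theorem weighted_tail_sum_identity
    (π : ℕ → ℝ) (hπ_nonneg : ∀ Δ, 0 ≤ π Δ) (hπ_summable : Summable π)
    (T ω : ℕ) (hT : 1 ≤ T) (hω : T ≤ ω)
    (a : ℕ → ℝ) (ha_nonneg : ∀ t ∈ Finset.Icc 1 T, 0 ≤ a t)
    (hrec : ∀ Δ : ℕ, ω ≤ Δ → π Δ = ∑ t ∈ Finset.Icc 1 T, a t * π (Δ - t))
    (f : ℕ → ℝ) (d : ℕ → ℝ)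
    (hf : ∀ i : ℕ, ω - T ≤ i → ∀ t ∈ Finset.Icc 1 T, f (i + t) = f i + d t)
    (hfπ : Summable (fun Δ : ℕ => |f Δ| * π Δ)) :
    (1 - ∑ t ∈ Finset.Icc 1 T, a t) * (∑' Δ : ℕ, f (Δ + ω) * π (Δ + ω))
      = ∑ t ∈ Finset.Icc 1 T, a t *
          ((∑ i ∈ Finset.Icc (ω - t) (ω - 1), f i * π i)
            + d t * ((∑ i ∈ Finset.Icc (ω - t) (ω - 1), π i)
                + ∑' Δ : ℕ, π (Δ + ω))) := by
  set g : ℕ → ℝ := fun Δ => f Δ * π Δ with hg_def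
  have hg_abs : (fun Δ => |g Δ|) = fun Δ => |f Δ| * π Δ := by
    funext Δ
    simp [hg_def, abs_mul, abs_of_nonneg (hπ_nonneg Δ)]
  have hg : Summable g := by
    refine Summable.of_abs ?_
    rw [hg_abs]; exact hfπ
  have hgt : ∀ m : ℕ, Summable (fun Δ => g (Δ + m)) :=
    fun m => (summable_nat_add_iff m).2 hg
  have hπt : ∀ m : ℕ, Summable (fun Δ => π (Δ + m)) :=
    fun m => (summable_nat_add_iff m).2 hπ_summable
  -- tail splitting lemma
  have split : ∀ (u : ℕ → ℝ), Summable u → ∀ t : ℕ, 1 ≤ t → t ≤ ω →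
      ∑' Δ : ℕ, u (Δ + (ω - t))
        = (∑ i ∈ Finset.Icc (ω - t) (ω - 1), u i) + ∑' Δ : ℕ, u (Δ + ω) := by
    intro u hu t ht1 htω
    set m := ω - t with hm_def
    have hm : m + t = ω := Nat.sub_add_cancel htω
    have hut : Summable (fun Δ => u (Δ + m)) := (summable_nat_add_iff m).2 hu
    have h1 := Summable.sum_add_tsum_nat_add (f := fun Δ => u (Δ + m)) t hut
    have h2 : (fun i : ℕ => u (i + t + m)) = fun i : ℕ => u (i + ω) := by
      funext i; congr 1; omega
    rw [h2] at h1
    have h3 : (∑ i ∈ Finset.range t, u (i + m))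
        = ∑ i ∈ Finset.Icc m (ω - 1), u i := by
      have hIcc : Finset.Icc m (ω - 1) = Finset.Ico m ω := by
        rw [← Finset.Ico_add_one_right_eq_Icc]
        congr 1
        omega
      rw [hIcc, Finset.sum_Ico_eq_sum_range]
      have : ω - m = t := by omega
      rw [this]
      refine Finset.sum_congr rfl fun i _ => ?_
      congr 1; omega
    rw [h3] at h1
    exact h1.symm
  -- per-t identity
  have key : ∀ t ∈ Finset.Icc 1 T,
      (∑' Δ : ℕ, f (Δ + ω) * π (Δ + ω - t))
        = ((∑ i ∈ Finset.Icc (ω - t) (ω - 1), f i * π i)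
            + d t * ((∑ i ∈ Finset.Icc (ω - t) (ω - 1), π i)
                + ∑' Δ : ℕ, π (Δ + ω)))
          + ∑' Δ : ℕ, g (Δ + ω) := by
    intro t ht
    obtain ⟨ht1, htT⟩ := Finset.mem_Icc.mp ht
    have htω : t ≤ ω := htT.trans hω
    set m := ω - t with hm_def
    have hm : m + t = ω := Nat.sub_add_cancel htω
    have hpt : ∀ Δ : ℕ, f (Δ + ω) * π (Δ + ω - t)
        = g (Δ + m) + d t * π (Δ + m) := by
      intro Δ
      have h1 : Δ + ω - t = Δ + m := by omega
      have h2 : Δ + ω = (Δ + m) + t := by omega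
      have h3 : ω - T ≤ Δ + m := by omega
      rw [h1, h2, hf (Δ + m) h3 t ht, hg_def]
      ring
    calc ∑' Δ : ℕ, f (Δ + ω) * π (Δ + ω - t)
        = ∑' Δ : ℕ, (g (Δ + m) + d t * π (Δ + m)) := by
          exact tsum_congr hpt
      _ = (∑' Δ : ℕ, g (Δ + m)) + d t * ∑' Δ : ℕ, π (Δ + m) := by
          rw [Summable.tsum_add (hgt m) ((hπt m).mul_left (d t)), tsum_mul_left]
      _ = ((∑ i ∈ Finset.Icc m (ω - 1), g i) + ∑' Δ : ℕ, g (Δ + ω))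
            + d t * ((∑ i ∈ Finset.Icc m (ω - 1), π i) + ∑' Δ : ℕ, π (Δ + ω)) := by
          rw [split g hg t ht1 htω, split π hπ_summable t ht1 htω]
      _ = _ := by rw [hg_def]; ring
  -- summability of each per-t summand
  have hsum_t : ∀ t ∈ Finset.Icc 1 T,
      Summable (fun Δ : ℕ => a t * (f (Δ + ω) * π (Δ + ω - t))) := by
    intro t ht
    obtain ⟨ht1, htT⟩ := Finset.mem_Icc.mp ht
    have htω : t ≤ ω := htT.trans hω
    have heq : (fun Δ : ℕ => a t * (f (Δ + ω) * π (Δ + ω - t)))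
        = fun Δ : ℕ => a t * (g (Δ + (ω - t)) + d t * π (Δ + (ω - t))) := by
      funext Δ
      have h1 : Δ + ω - t = Δ + (ω - t) := by omega
      have h2 : Δ + ω = (Δ + (ω - t)) + t := by omega
      have h3 : ω - T ≤ Δ + (ω - t) := by omega
      rw [h1, h2, hf (Δ + (ω - t)) h3 t ht, hg_def]
      ring
    rw [heq]
    exact ((hgt (ω - t)).add ((hπt (ω - t)).mul_left (d t))).mul_left (a t)
  -- main computation
  have hS : (∑' Δ : ℕ, g (Δ + ω))
      = ∑ t ∈ Finset.Icc 1 T, a t * (∑' Δ : ℕ, f (Δ + ω) * π (Δ + ω - t)) := by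
    calc (∑' Δ : ℕ, g (Δ + ω))
        = ∑' Δ : ℕ, ∑ t ∈ Finset.Icc 1 T, a t * (f (Δ + ω) * π (Δ + ω - t)) := by
          refine tsum_congr fun Δ => ?_
          rw [hg_def]
          simp only []
          rw [hrec (Δ + ω) (Nat.le_add_left ω Δ), Finset.mul_sum]
          refine Finset.sum_congr rfl fun t ht => ?_
          ring
      _ = ∑ t ∈ Finset.Icc 1 T, ∑' Δ : ℕ, a t * (f (Δ + ω) * π (Δ + ω - t)) := by
          exact Summable.tsum_finsetSum hsum_t
      _ = _ := by
          refine Finset.sum_congr rfl fun t ht => ?_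
          rw [tsum_mul_left]
  rw [show (∑' Δ : ℕ, f (Δ + ω) * π (Δ + ω)) = ∑' Δ : ℕ, g (Δ + ω) from rfl]
  have hS2 : (∑ t ∈ Finset.Icc 1 T, a t * (∑' Δ : ℕ, f (Δ + ω) * π (Δ + ω - t)))
      = (∑ t ∈ Finset.Icc 1 T, a t *
          ((∑ i ∈ Finset.Icc (ω - t) (ω - 1), f i * π i)
            + d t * ((∑ i ∈ Finset.Icc (ω - t) (ω - 1), π i)
                + ∑' Δ : ℕ, π (Δ + ω))))
        + (∑ t ∈ Finset.Icc 1 T, a t) * (∑' Δ : ℕ, g (Δ + ω)) := by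
    rw [Finset.sum_mul, ← Finset.sum_add_distrib]
    refine Finset.sum_congr rfl fun t ht => ?_
    rw [key t ht]
    ring
  rw [hS2] at hS
  linarith [hS]
end

section
/- The Bellman update preserves monotonicity in the AoII coordinate (induction step of Lemma 5): Let I be a nonempty finite type (the auxiliary channel state), A a nonempty finite type (the actions), γ a real number with 0 ≤ γ, and q⁺, q⁰ : I → A → I → ℝ nonnegative functions. For V : ℕ × I → ℝ define (TV)(Δ, x) := min over a ∈ A of ( Δ + γ·Σ_{x' ∈ I} ( q⁺(x, a, x')·V(Δ+1, x') + q⁰(x, a, x')·V(0, x') ) ) for every integer Δ ≥ 1 and x ∈ I. If V(Δ+1, x) ≥ V(Δ, x) for every integer Δ ≥ 1 and every x ∈ I, then (TV)(Δ+1, x) ≥ (TV)(Δ, x) for every integer Δ ≥ 1 and every x ∈ I. -/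
/-- The Bellman (value-iteration) operator of the paper's discounted MDP:
from a state with AoII level `Δ ≥ 1` and channel state `x`, the AoII either
increases to `Δ+1` or resets to `0`, with `Δ`-independent probabilities
`qp x a x'` and `q0 x a x'`; the instantaneous cost is `Δ`. -/
noncomputable def bellmanT {I A : Type*} [Fintype I] [Nonempty A]
    (γ : ℝ) (qp q0 : I → A → I → ℝ) (V : ℕ × I → ℝ) (Δ : ℕ) (x : I) : ℝ :=
  ⨅ a : A, ((Δ : ℝ) + γ * ∑ x' : I, (qp x a x' * V (Δ + 1, x') + q0 x a x' * V (0, x')))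

/-- The Bellman update preserves monotonicity in the AoII coordinate
(induction step of Lemma 5 of the paper). -/
theorem bellman_update_preserves_monotone
    {I A : Type*} [Fintype I] [Nonempty I] [Fintype A] [Nonempty A]
    (γ : ℝ) (hγ : 0 ≤ γ)
    (qp q0 : I → A → I → ℝ)
    (hqp : ∀ x a x', 0 ≤ qp x a x') (hq0 : ∀ x a x', 0 ≤ q0 x a x')
    (V : ℕ × I → ℝ)
    (hV : ∀ Δ : ℕ, 1 ≤ Δ → ∀ x : I, V (Δ, x) ≤ V (Δ + 1, x)) :
    ∀ Δ : ℕ, 1 ≤ Δ → ∀ x : I,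
      bellmanT γ qp q0 V Δ x ≤ bellmanT γ qp q0 V (Δ + 1) x := by
  intro Δ hΔ x
  unfold bellmanT
  apply ciInf_mono
  · exact (Set.finite_range _).bddBelow
  · intro a
    have h1 : (Δ : ℝ) ≤ ((Δ + 1 : ℕ) : ℝ) := by exact_mod_cast Nat.le_succ Δ
    refine add_le_add h1 (mul_le_mul_of_nonneg_left (Finset.sum_le_sum ?_) hγ)
    intro x' _
    exact add_le_add (mul_le_mul_of_nonneg_left
      (hV (Δ + 1) (Nat.le_succ_of_le hΔ) x') (hqp x a x')) le_rfl
end
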